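/- Every surjective endomorphism of a finitely generated free group is an isomorphism (finitely generated free groups are Hopfian). -/

import Mathlib

/-!
Mal'cev's argument: if `f : G → G` is surjective and `G` is finitely generated, then
precomposition with `f` is an injective, hence bijective, self-map of the finite set
`Hom(G, Q)` for every finite group `Q`; so an element killed by `f` is killed by every map
to a finite group, and it is trivial as soon as `G` is residually finite.
A free group is residually finite: for a reduced word `L` of length `n`, choose for each
generator `a` a permutation of `{0, …, n}` moving `i + 1` to `i` through every letter `a^±1`
at index `i`; reducedness makes these prescriptions consistent, and the word then sends `n` to `0`.
-/

open Function Equiv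

instance MonoidHom.finite_of_fg {G H : Type*} [Group G] [Group.FG G] [Group H] [Finite H] :
    Finite (G →* H) := by
  obtain ⟨S, hS, hSfin⟩ := Group.fg_iff.mp ‹_›
  have : Finite S := hSfin
  exact .of_injective (fun φ : G →* H => fun s : S => φ s)
    fun φ ψ h => MonoidHom.eq_of_eqOn_dense hS fun s hs => congr_fun h ⟨s, hs⟩

theorem Group.ResiduallyFinite.injective_of_surjective {G : Type*} [Group G] [Group.FG G]
    [Group.ResiduallyFinite G] {f : G →* G} (hf : Surjective f) : Injective f := by
  rw [injective_iff_map_eq_one]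
  intro x hfx
  by_contra hx
  obtain ⟨H, hxH⟩ := Group.exists_finiteIndexNormalSubgroup_notMem x hx
  have hcomp : Injective fun ψ : G →* G ⧸ H.toSubgroup => ψ.comp f :=
    fun _ _ h => (MonoidHom.cancel_right hf).mp h
  obtain ⟨ψ, hψ⟩ := Finite.surjective_of_injective hcomp (QuotientGroup.mk' H.toSubgroup)
  apply hxH
  rw [← FiniteIndexNormalSubgroup.mem_toSubgroup_iff, ← QuotientGroup.eq_one_iff,
    ← QuotientGroup.mk'_apply, ← hψ]
  simp [hfx]

theorem List.prod_apply_eq_of_chain {β : Type*} (ps : List (Equiv.Perm β))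
    (x : Fin (ps.length + 1) → β)
    (h : ∀ i : Fin ps.length, ps[i] (x i.succ) = x i.castSucc) :
    ps.prod (x (Fin.last _)) = x 0 := by
  induction ps with
  | nil => rfl
  | cons p ps ih =>
    have hps : ps.prod (x (Fin.last _)) = x 1 :=
      ih (x ∘ Fin.succ) fun i => by simpa [← Fin.succ_castSucc] using h i.succ
    exact (congrArg p hps).trans (h 0)

namespace FreeGroup

variable {α : Type*} {L : List (α × Bool)}

theorem IsReduced.injective_succ_or_castSucc (hL : IsReduced L) (a : α) (b : Bool) :
    Injective fun i : {i : Fin L.length // L[i].1 = a} =>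
      if L[i.1].2 = b then i.1.succ else i.1.castSucc := by
  rintro ⟨⟨i, hi⟩, hia⟩ ⟨⟨k, hk⟩, hka⟩ h
  simp only [Fin.getElem_fin] at hia hka h
  simp only [Subtype.mk.injEq, Fin.mk.injEq]
  -- a letter of `a` followed by one of `a⁻¹` (or vice versa) would cancel
  split_ifs at h with hib hkb hkb <;> simp only [Fin.ext_iff, Fin.val_succ, Fin.val_castSucc] at h
  · omega
  · obtain rfl : k = i + 1 := by omega
    have := hL.getElem i hk (hia.trans hka.symm)
    simp_all
  · obtain rfl : i = k + 1 := by omega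
    have := hL.getElem k hi (hka.trans hia.symm)
    simp_all
  · omega

theorem IsReduced.exists_perm_cond_apply_succ (hL : IsReduced L) (a : α) :
    ∃ σ : Perm (Fin (L.length + 1)), ∀ i : Fin L.length, L[i].1 = a →
      cond L[i].2 σ σ⁻¹ i.succ = i.castSucc := by
  obtain ⟨σ, hσ⟩ := Perm.exists_extending_pair _ _
    (hL.injective_succ_or_castSucc a true) (hL.injective_succ_or_castSucc a false)
  refine ⟨σ, fun i hi => ?_⟩
  have hσi := hσ ⟨i, hi⟩
  cases hb : L[i].2 <;> simp only [hb] at hσi ⊢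
  · exact Perm.inv_eq_iff_eq.mpr (by simpa using hσi.symm)
  · simpa using hσi

theorem exists_perm_hom_apply_ne_one [DecidableEq α] {x : FreeGroup α} (hx : x ≠ 1) :
    ∃ φ : FreeGroup α →* Perm (Fin (x.toWord.length + 1)), φ x ≠ 1 := by
  set L := x.toWord
  choose σ hσ using isReduced_toWord.exists_perm_cond_apply_succ (L := L)
  refine ⟨lift σ, fun h => ?_⟩
  -- the word `L` carries position `|L|` back to position `0`, one letter at a time
  have hchain := List.prod_apply_eq_of_chain (L.map fun l => cond l.2 (σ l.1) (σ l.1)⁻¹)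
    (Fin.cast (by simp)) fun i => by simpa using hσ _ (i.cast (by simp)) rfl
  rw [← lift_mk, mk_toWord, h] at hchain
  have hL : L.length = 0 := by simpa [Fin.ext_iff] using hchain
  exact hx (toWord_eq_nil_iff.mp (List.length_eq_zero_iff.mp hL))

instance instResiduallyFinite : Group.ResiduallyFinite (FreeGroup α) := by
  classical
  refine Group.residuallyFinite_iff_exists_finiteIndex.mpr fun x hx => ?_
  obtain ⟨φ, hφ⟩ := exists_perm_hom_apply_ne_one hx
  exact ⟨φ.ker, inferInstance, by simpa using hφ⟩

end FreeGroup

/-- Finitely generated free groups are Hopfian: every surjective endomorphism is injective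
(hence an isomorphism). -/
theorem freeGroup_hopfian
    (α : Type*) [Finite α] (f : FreeGroup α →* FreeGroup α)
    (hf : Function.Surjective f) : Function.Injective f :=
  Group.ResiduallyFinite.injective_of_surjective hf
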